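/- arXiv:2006.16557 — 7 statements merged into one kernel-verified Lean document; each statement's English description precedes it below -/
import Mathlib

section
/- Let β be a finite type (the users), α a type (the files), and V a vector space over ZMod 2. Let W : α → Finset β → V be an arbitrary segment assignment, fix a user k : β, and for f : α and S : Finset β with k ∉ S define the row parity Z_row(f, S) = ∑_{u ∈ Finset.univ \ (S ∪ {k})} W f (insert u S). Then for every R⁻ : Finset β with k ∉ R⁻, every l ∈ R⁻, and every f : α, one has Z_row(f, R⁻) = ∑_{h ∈ Finset.univ \ (R⁻ ∪ {k})} Z_row(f, insert h (R⁻.erase l)). -/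
/-- Equation (1) of Lemma 1: linear dependence among the row parities
`Z_row(f, S) = ∑_{u ∈ univ \ (S ∪ {k})} W f (insert u S)` of the product code. -/
theorem row_parity_dependence
    {β α V : Type*} [Fintype β] [DecidableEq β]
    [AddCommGroup V] [Module (ZMod 2) V]
    (W : α → Finset β → V) (k : β)
    (Rm : Finset β) (hk : k ∉ Rm) (l : β) (hl : l ∈ Rm) (f : α) :
    (∑ u ∈ Finset.univ \ (Rm ∪ {k}), W f (insert u Rm)) =
      ∑ h ∈ Finset.univ \ (Rm ∪ {k}),
        ∑ u ∈ Finset.univ \ ((insert h (Rm.erase l)) ∪ {k}),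
          W f (insert u (insert h (Rm.erase l))) := by
  classical
  have char2 : ∀ v : V, v + v = 0 := by
    intro v
    have h2 : (2 : ZMod 2) • v = v + v := two_smul _ v
    have h0 : (2 : ZMod 2) = 0 := rfl
    rw [h0, zero_smul] at h2
    exact h2.symm
  set T := Rm.erase l with hT
  have hRm : insert l T = Rm := Finset.insert_erase hl
  have hlT : l ∉ T := Finset.notMem_erase l Rm
  have hlk : l ≠ k := fun e => hk (e ▸ hl)
  set A := Finset.univ \ (Rm ∪ {k}) with hA
  have hmemA : ∀ x, x ∈ A ↔ (x ≠ l ∧ x ∉ T) ∧ x ≠ k := by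
    intro x
    rw [hA, ← hRm]
    simp only [Finset.mem_sdiff, Finset.mem_univ, true_and, Finset.mem_union,
      Finset.mem_insert, Finset.mem_singleton, not_or]
  have hlA : l ∉ A := fun h => (((hmemA l).1 h).1).1 rfl
  have hidx : ∀ h ∈ A, Finset.univ \ (insert h T ∪ {k}) = insert l (A.erase h) := by
    intro h hh
    obtain ⟨⟨hhl, hhT⟩, hhk⟩ := (hmemA h).1 hh
    ext x
    simp only [Finset.mem_sdiff, Finset.mem_univ, true_and, Finset.mem_union,
      Finset.mem_insert, Finset.mem_singleton, not_or, Finset.mem_erase, hmemA]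
    by_cases hxl : x = l
    · subst hxl; tauto
    · tauto
  have hzero : ∑ h ∈ A, ∑ u ∈ A.erase h, W f (insert u (insert h T)) = 0 := by
    rw [Finset.sum_sigma']
    refine Finset.sum_involution (fun p _ => ⟨p.2, p.1⟩) ?_ ?_ ?_ ?_
    · intro p _
      dsimp only
      rw [Finset.insert_comm p.1 p.2]
      exact char2 _
    · intro p hp _
      have hne : p.2 ≠ p.1 := (Finset.mem_erase.1 (Finset.mem_sigma.1 hp).2).1
      intro e
      exact hne (congrArg Sigma.fst e)
    · intro p hp
      obtain ⟨h1, h2⟩ := Finset.mem_sigma.1 hp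
      obtain ⟨hne, h2A⟩ := Finset.mem_erase.1 h2
      exact Finset.mem_sigma.2 ⟨h2A, Finset.mem_erase.2 ⟨fun e => hne e.symm, h1⟩⟩
    · intro p hp
      rfl
  calc (∑ u ∈ A, W f (insert u Rm))
      = ∑ h ∈ A, W f (insert h Rm) + 0 := by rw [add_zero]
    _ = ∑ h ∈ A, W f (insert l (insert h T))
          + ∑ h ∈ A, ∑ u ∈ A.erase h, W f (insert u (insert h T)) := by
        rw [hzero]
        congr 1
        refine Finset.sum_congr rfl fun h hh => ?_
        rw [Finset.insert_comm, hRm]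
    _ = ∑ h ∈ A, (W f (insert l (insert h T))
          + ∑ u ∈ A.erase h, W f (insert u (insert h T))) := by
        rw [Finset.sum_add_distrib]
    _ = ∑ h ∈ A, ∑ u ∈ insert l (A.erase h), W f (insert u (insert h T)) := by
        refine Finset.sum_congr rfl fun h hh => ?_
        rw [Finset.sum_insert (fun hc => hlA (Finset.mem_of_mem_erase hc))]
    _ = ∑ h ∈ A, ∑ u ∈ Finset.univ \ (insert h T ∪ {k}), W f (insert u (insert h T)) := by
        refine Finset.sum_congr rfl fun h hh => ?_
        rw [hidx h hh]
end

section
/- Let β be a finite type (the users), α a finite type (the files), and V a vector space over ZMod 2. Let W : α → Finset β → V be an arbitrary segment assignment and fix a user k : β. For a subset S : Finset β define the column parity Z_col(S) = ∑_{f : α} W f S, and for f : α and S with k ∉ S define the row parity Z_row(f, S) = ∑_{u ∈ Finset.univ \ (S ∪ {k})} W f (insert u S). Then for every R⁻ : Finset β with k ∉ R⁻ and every fixed file f₀ : α, one has Z_row(f₀, R⁻) = ∑_{R} Z_col(R) + ∑_{f ≠ f₀} Z_row(f, R⁻), where the first sum ranges over all R : Finset β with R⁻ ⊆ R, |R| =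 |R⁻| + 1 and k ∉ R, and the second sum ranges over all f : α with f ≠ f₀. -/
/-- Equation (2) of Lemma 1: the row parity
`Z_row(f₀, R⁻) = ∑_{u ∈ univ \ (R⁻ ∪ {k})} W f₀ (insert u R⁻)` of a designated file `f₀`
equals the sum of the column parities `Z_col(R) = ∑_f W f R` over all
`R ⊇ R⁻` with `|R| = |R⁻| + 1` and `k ∉ R`, plus the row parities of all other files. -/
theorem row_parity_from_column_parities
    {β α V : Type*} [Fintype β] [DecidableEq β] [Fintype α] [DecidableEq α]
    [AddCommGroup V] [Module (ZMod 2) V]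
    (W : α → Finset β → V) (k : β)
    (Rm : Finset β) (hk : k ∉ Rm) (f₀ : α) :
    (∑ u ∈ Finset.univ \ (Rm ∪ {k}), W f₀ (insert u Rm)) =
      (∑ R ∈ Finset.univ.filter
          (fun R : Finset β => Rm ⊆ R ∧ R.card = Rm.card + 1 ∧ k ∉ R),
        ∑ f : α, W f R) +
      ∑ f ∈ Finset.univ \ {f₀},
        ∑ u ∈ Finset.univ \ (Rm ∪ {k}), W f (insert u Rm) := by
  have key : (∑ R ∈ Finset.univ.filter
          (fun R : Finset β => Rm ⊆ R ∧ R.card = Rm.card + 1 ∧ k ∉ R),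
        ∑ f : α, W f R) =
      ∑ u ∈ Finset.univ \ (Rm ∪ {k}), ∑ f : α, W f (insert u Rm) := by
    refine ((Finset.sum_nbij' (i := fun u => insert u Rm)
      (j := fun R => if h : (R \ Rm).Nonempty then h.choose else k)
      ?_ ?_ ?_ ?_ ?_)).symm
    · intro u hu
      simp only [Finset.mem_sdiff, Finset.mem_univ, Finset.mem_union,
        Finset.mem_singleton, true_and] at hu
      push_neg at hu
      simp only [Finset.mem_filter, Finset.mem_univ, true_and]
      refine ⟨Finset.subset_insert _ _, by rw [Finset.card_insert_of_notMem hu.1], ?_⟩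
      simp [hu.1, hu.2, hk, Ne.symm hu.2]
    · intro R hR
      simp only [Finset.mem_filter, Finset.mem_univ, true_and] at hR
      obtain ⟨hsub, hcard, hkR⟩ := hR
      have hne : (R \ Rm).Nonempty := by
        rw [← Finset.card_pos, Finset.card_sdiff_of_subset hsub, hcard]; omega
      rw [dif_pos hne]
      have hmem := hne.choose_spec
      rw [Finset.mem_sdiff] at hmem
      simp only [Finset.mem_sdiff, Finset.mem_univ, Finset.mem_union,
        Finset.mem_singleton, true_and]
      push_neg
      exact ⟨hmem.2, fun h => hkR (h ▸ hmem.1)⟩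
    · intro u hu
      simp only [Finset.mem_sdiff, Finset.mem_univ, Finset.mem_union,
        Finset.mem_singleton, true_and] at hu
      push_neg at hu
      have hne : (insert u Rm \ Rm).Nonempty :=
        ⟨u, Finset.mem_sdiff.mpr ⟨Finset.mem_insert_self _ _, hu.1⟩⟩
      rw [dif_pos hne]
      have hc := hne.choose_spec
      rw [Finset.mem_sdiff] at hc
      rcases Finset.mem_insert.mp hc.1 with h | h
      · exact h
      · exact absurd h hc.2
    · intro R hR
      simp only [Finset.mem_filter, Finset.mem_univ, true_and] at hR
      obtain ⟨hsub, hcard, hkR⟩ := hR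
      have hne : (R \ Rm).Nonempty := by
        rw [← Finset.card_pos, Finset.card_sdiff_of_subset hsub, hcard]; omega
      rw [dif_pos hne]
      have hmem := hne.choose_spec
      rw [Finset.mem_sdiff] at hmem
      have hcc : (insert hne.choose Rm).card = R.card := by
        rw [Finset.card_insert_of_notMem hmem.2, hcard]
      exact (Finset.eq_of_subset_of_card_le (Finset.insert_subset hmem.1 hsub) hcc.ge)
    · intro u hu; rfl
  rw [key, Finset.sum_comm]
  have split : (∑ f : α, ∑ u ∈ Finset.univ \ (Rm ∪ {k}), W f (insert u Rm)) =
      (∑ u ∈ Finset.univ \ (Rm ∪ {k}), W f₀ (insert u Rm)) +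
      ∑ f ∈ Finset.univ \ {f₀}, ∑ u ∈ Finset.univ \ (Rm ∪ {k}), W f (insert u Rm) := by
    rw [← Finset.sum_sdiff (Finset.subset_univ {f₀}), Finset.sum_singleton, add_comm]
  rw [split, add_assoc]
  have h2 : ∀ v : V, v + v = 0 := fun v => by
    have h20 : (2 : ZMod 2) = 0 := by decide
    calc v + v = (2 : ZMod 2) • v := (two_smul _ v).symm
    _ = 0 := by rw [h20, zero_smul]
  rw [h2, add_zero]
end

section
/- Let β be a finite type (the users), α a type (the files), and V a vector space over ZMod 2. Let B : Finset β, let d : β → α be a demand function, and let W : α → Finset β → V be an arbitrary (transformed) segment assignment. For S : Finset β define the delivery symbol Y(S) = ∑_{t ∈ S} W (d t) (S.erase t). Let 𝒱 be the collection of all subsets V' ⊆ B such that d is injective on V' and the image of V' under d equals the image of B under d (i.e., every file requested by some user in B is requested by exactly one user in V'). Then ∑_{V' ∈ 𝒱} Y(B \ V') = 0. -/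
open Classical

/-- Lemma 2: linear dependence among delivery symbols
`Y(S) = ∑_{t ∈ S} W (d t) (S.erase t)`.  Summed over all `V' ⊆ B` on which `d` is
injective and whose image under `d` equals that of `B`, the symbols `Y(B \ V')` XOR
to zero. -/
theorem delivery_symbol_dependence
    {β α V : Type*} [Fintype β] [DecidableEq β]
    [AddCommGroup V] [Module (ZMod 2) V]
    (B : Finset β) (d : β → α) (W : α → Finset β → V) :
    ∑ V' ∈ B.powerset.filter
        (fun V' : Finset β => Set.InjOn d ↑V' ∧ V'.image d = B.image d),
      ∑ t ∈ B \ V', W (d t) ((B \ V').erase t) = 0 := by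
  classical
  have char2 : ∀ v : V, v + v = 0 := by
    intro v
    have h2 : (2 : ZMod 2) • v = 0 := by
      have h0 : (2 : ZMod 2) = 0 := by decide
      rw [h0, zero_smul]
    rwa [two_smul] at h2
  rw [Finset.sum_sigma']
  set s := (B.powerset.filter
        (fun V' : Finset β => Set.InjOn d ↑V' ∧ V'.image d = B.image d)).sigma
        (fun V' => B \ V') with hs
  have memspec : ∀ x : (_ : Finset β) × β, x ∈ s →
      x.1 ⊆ B ∧ Set.InjOn d ↑x.1 ∧ x.1.image d = B.image d ∧ x.2 ∈ B ∧ x.2 ∉ x.1 := by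
    rintro ⟨V', t⟩ hx
    simp only [hs, Finset.mem_sigma, Finset.mem_filter, Finset.mem_powerset,
      Finset.mem_sdiff] at hx
    exact ⟨hx.1.1, hx.1.2.1, hx.1.2.2, hx.2.1, hx.2.2⟩
  have key : ∀ x : (_ : Finset β) × β, x ∈ s →
      ∃! u, u ∈ x.1 ∧ d u = d x.2 := by
    rintro ⟨V', t⟩ hx
    obtain ⟨hVB, hinj, himg, htB, htV⟩ := memspec _ hx
    have hdt : d t ∈ V'.image d := by rw [himg]; exact Finset.mem_image_of_mem d htB
    obtain ⟨u, hu, hdu⟩ := Finset.mem_image.mp hdt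
    exact ⟨u, ⟨hu, hdu⟩, fun y hy => hinj hy.1 hu (hy.2.trans hdu.symm)⟩
  -- bundle of facts about the swap
  have main : ∀ x (hx : x ∈ s),
      (key x hx).choose ≠ x.2 ∧
      d (key x hx).choose = d x.2 ∧
      (⟨insert x.2 (x.1.erase (key x hx).choose), (key x hx).choose⟩ :
        (_ : Finset β) × β) ∈ s ∧
      (B \ insert x.2 (x.1.erase (key x hx).choose)).erase (key x hx).choose
        = (B \ x.1).erase x.2 := by
    rintro ⟨V', t⟩ hx
    obtain ⟨hVB, hinj, himg, htB, htV⟩ := memspec _ hx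
    obtain ⟨⟨huV, hdu⟩, huniq⟩ := (key ⟨V', t⟩ hx).choose_spec
    set u := (key ⟨V', t⟩ hx).choose with hu_def
    have hut : u ≠ t := fun h => htV (h ▸ huV)
    have htne : t ∉ V'.erase u := fun h => htV (Finset.mem_of_mem_erase h)
    refine ⟨hut, hdu, ?_, ?_⟩
    · simp only [hs, Finset.mem_sigma, Finset.mem_filter, Finset.mem_powerset,
        Finset.mem_sdiff]
      have hsubB : insert t (V'.erase u) ⊆ B := by
        intro x hx'
        rcases Finset.mem_insert.mp hx' with rfl | hx'
        · exact htB
        · exact hVB (Finset.mem_of_mem_erase hx')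
      have hinj' : Set.InjOn d ↑(insert t (V'.erase u)) := by
        intro x hxm y hym hxy
        simp only [Finset.coe_insert, Set.mem_insert_iff, Finset.coe_erase,
          Set.mem_diff, Finset.mem_coe, Set.mem_singleton_iff] at hxm hym
        rcases hxm with rfl | ⟨hxV, hxu⟩ <;> rcases hym with rfl | ⟨hyV, hyu⟩
        · rfl
        · exact absurd (hinj hyV huV (hxy.symm.trans hdu.symm)) hyu
        · exact absurd (hinj hxV huV (hxy.trans hdu.symm)) hxu
        · exact hinj hxV hyV hxy
      have himg' : (insert t (V'.erase u)).image d = B.image d := by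
        rw [Finset.image_insert, ← himg]
        conv_rhs => rw [← Finset.insert_erase huV, Finset.image_insert, hdu]
      refine ⟨⟨hsubB, hinj', himg'⟩, hVB huV, ?_⟩
      simp only [Finset.mem_insert, Finset.mem_erase, not_or, not_and]
      exact ⟨hut, fun h => absurd rfl h⟩
    · ext x
      simp only [Finset.mem_erase, Finset.mem_sdiff, Finset.mem_insert, not_or, not_and]
      constructor
      · rintro ⟨hxu, hxB, hxt, hxe⟩
        exact ⟨hxt, hxB, fun hxV => hxe hxu hxV⟩
      · rintro ⟨hxt, hxB, hxV⟩
        exact ⟨fun h => hxV (h ▸ huV), hxB, hxt, fun _ hxV' => absurd hxV' hxV⟩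
  refine Finset.sum_involution
    (fun x hx => ⟨insert x.2 (x.1.erase (key x hx).choose), (key x hx).choose⟩)
    ?_ ?_ (fun x hx => (main x hx).2.2.1) ?_
  · -- sums to zero
    intro x hx
    obtain ⟨hut, hdu, hmem, hsd⟩ := main x hx
    show W (d x.2) ((B \ x.1).erase x.2) + W (d _) _ = 0
    rw [hsd, hdu]
    exact char2 _
  · -- no fixed point
    intro x hx _
    obtain ⟨hut, -, -, -⟩ := main x hx
    intro h
    exact hut (congrArg Sigma.snd h)
  · -- involution
    rintro ⟨V', t⟩ hx
    obtain ⟨hut, hdu, hmem, hsd⟩ := main ⟨V', t⟩ hx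
    obtain ⟨⟨huV, hdu'⟩, huniq⟩ := (key ⟨V', t⟩ hx).choose_spec
    set u := (key ⟨V', t⟩ hx).choose with hu_def
    obtain ⟨hVB, hinj, himg, htB, htV⟩ := memspec _ hx
    have htne : t ∉ V'.erase u := fun h => htV (Finset.mem_of_mem_erase h)
    set V'' := insert t (V'.erase u) with hV''
    have hmem2 : (⟨V'', u⟩ : (_ : Finset β) × β) ∈ s := hmem
    have hc2 : (key (⟨V'', u⟩ : (_ : Finset β) × β) hmem2).choose = t :=
      ExistsUnique.unique (key (⟨V'', u⟩ : (_ : Finset β) × β) hmem2) (key (⟨V'', u⟩ : (_ : Finset β) × β) hmem2).choose_spec.1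
        ⟨Finset.mem_insert_self _ _, hdu'.symm⟩
    have harg : (key (⟨V'', u⟩ : (_ : Finset β) × β) (main ⟨V', t⟩ hx).2.2.1).choose = t := hc2
    refine Sigma.ext ?_ (heq_of_eq harg)
    show insert u (V''.erase (key (⟨V'', u⟩ : (_ : Finset β) × β)
        (main ⟨V', t⟩ hx).2.2.1).choose) = V'
    rw [harg, hV'', Finset.erase_insert htne, Finset.insert_erase huV]
end

section
/- Let β be a finite type (the users), α a type (the files), and V a vector space over ZMod 2. Let d : β → α be a demand function and W : α → Finset β → V an arbitrary (transformed) segment assignment. Fix a user k : β and a subset R : Finset β with k ∉ R, and write r = |R|. Then W (d k) R = Z(R) + ∑_{t ∈ R} ∑_{v ∈ Finset.univ \ ((R.erase t) ∪ {k})} W (d t) (insert v (R.erase t)) + ∑_{R⁺} Y(R⁺), where Z(R) = ∑_{t : β} W (d t) R, Y(S) = ∑_{t ∈ S} W (d t) (S.erase t), and the last sum ranges over all R⁺ : Finset β with R ⊂ R⁺, k ∉ R⁺ and |R⁺| = r + 1. -/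
/-- Lemma 3 (decoding by interference alignment): user `k` recovers its missing
transformed segment `W (d k) R` from the aggregate symbol `Z(R) = ∑_t W (d t) R`,
the row parities (middle double sum), and the delivery symbols
`Y(R⁺) = ∑_{t ∈ R⁺} W (d t) (R⁺.erase t)` over all `R⁺ ⊃ R` with `k ∉ R⁺` and
`|R⁺| = |R| + 1`. -/
theorem decoding_by_interference_alignment
    {β α V : Type*} [Fintype β] [DecidableEq β]
    [AddCommGroup V] [Module (ZMod 2) V]
    (d : β → α) (W : α → Finset β → V) (k : β) (R : Finset β) (hk : k ∉ R) :
    W (d k) R = (∑ t : β, W (d t) R)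
      + (∑ t ∈ R, ∑ v ∈ Finset.univ \ ((R.erase t) ∪ {k}),
          W (d t) (insert v (R.erase t)))
      + ∑ Rp ∈ Finset.univ.filter
          (fun Rp : Finset β => R ⊂ Rp ∧ k ∉ Rp ∧ Rp.card = R.card + 1),
          ∑ t ∈ Rp, W (d t) (Rp.erase t) := by
  classical
  have h2 : ∀ v : V, v + v = 0 := by
    intro v
    have : (2 : ZMod 2) • v = 0 := by
      have h : (2 : ZMod 2) = 0 := by decide
      rw [h, zero_smul]
    rwa [two_smul] at this
  set U : Finset β := Finset.univ \ insert k R with hU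
  -- reindex the last sum
  have hfilter : Finset.univ.filter
      (fun Rp : Finset β => R ⊂ Rp ∧ k ∉ Rp ∧ Rp.card = R.card + 1)
      = U.image (fun v => insert v R) := by
    ext Rp
    simp only [Finset.mem_filter, Finset.mem_image, hU, Finset.mem_sdiff,
      Finset.mem_univ, true_and, Finset.mem_insert]
    constructor
    · rintro ⟨hss, hkn, hcard⟩
      obtain ⟨v, hv, rfl⟩ := Finset.exists_eq_insert_iff.mpr ⟨hss.subset, hcard.symm⟩
      refine ⟨v, ?_, rfl⟩
      rintro (rfl | h)
      · exact hkn (Finset.mem_insert_self _ _)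
      · exact hv h
    · rintro ⟨v, hv, rfl⟩
      push_neg at hv
      refine ⟨Finset.ssubset_insert hv.2, ?_, Finset.card_insert_of_notMem hv.2⟩
      simp only [Finset.mem_insert]
      rintro (rfl | h)
      · exact hv.1 rfl
      · exact hk h
  have hinj : ∀ x ∈ U, ∀ y ∈ U, insert x R = insert y R → x = y := by
    intro x hx y hy hxy
    simp only [hU, Finset.mem_sdiff, Finset.mem_univ, true_and, Finset.mem_insert] at hx hy
    push_neg at hx hy
    have : x ∈ insert y R := hxy ▸ Finset.mem_insert_self x R
    rcases Finset.mem_insert.mp this with h | h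
    · exact h
    · exact absurd h hx.2
  have hvU : ∀ v ∈ U, v ∉ R ∧ v ≠ k := by
    intro v hv
    simp only [hU, Finset.mem_sdiff, Finset.mem_univ, true_and, Finset.mem_insert] at hv
    push_neg at hv
    exact ⟨hv.2, hv.1⟩
  have hlast : ∑ Rp ∈ Finset.univ.filter
      (fun Rp : Finset β => R ⊂ Rp ∧ k ∉ Rp ∧ Rp.card = R.card + 1),
      ∑ t ∈ Rp, W (d t) (Rp.erase t)
      = (∑ v ∈ U, W (d v) R)
        + ∑ v ∈ U, ∑ t ∈ R, W (d t) ((insert v R).erase t) := by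
    rw [hfilter, Finset.sum_image hinj, ← Finset.sum_add_distrib]
    refine Finset.sum_congr rfl fun v hv => ?_
    obtain ⟨hvR, hvk⟩ := hvU v hv
    rw [Finset.sum_insert hvR, Finset.erase_insert hvR]
  -- middle sum
  have hmid : ∀ t ∈ R, Finset.univ \ ((R.erase t) ∪ {k}) = insert t U := by
    intro t ht
    have htk : t ≠ k := fun h => hk (h ▸ ht)
    ext v
    simp only [hU, Finset.mem_sdiff, Finset.mem_univ, true_and, Finset.mem_union,
      Finset.mem_singleton, Finset.mem_insert, Finset.mem_erase]
    push_neg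
    constructor
    · rintro ⟨h1, h2⟩
      by_cases hvt : v = t
      · exact Or.inl hvt
      · exact Or.inr ⟨h2, h1 hvt⟩
    · rintro (rfl | ⟨h1, h2⟩)
      · exact ⟨fun h => absurd rfl h, htk⟩
      · exact ⟨fun _ => h2, h1⟩
  have hmid2 : ∑ t ∈ R, ∑ v ∈ Finset.univ \ ((R.erase t) ∪ {k}),
      W (d t) (insert v (R.erase t))
      = (∑ t ∈ R, W (d t) R)
        + ∑ t ∈ R, ∑ v ∈ U, W (d t) ((insert v R).erase t) := by
    rw [← Finset.sum_add_distrib]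
    refine Finset.sum_congr rfl fun t ht => ?_
    have htU : t ∉ U := by
      simp [hU, Finset.mem_insert, ht]
    rw [hmid t ht, Finset.sum_insert htU, Finset.insert_erase ht]
    congr 1
    refine Finset.sum_congr rfl fun v hv => ?_
    have hvt : v ≠ t := by
      rintro rfl
      exact (hvU v hv).1 ht
    rw [Finset.erase_insert_of_ne hvt]
  -- aggregate sum split
  have hZ : ∑ t : β, W (d t) R = W (d k) R + ∑ t ∈ Finset.univ.erase k, W (d t) R :=
    (Finset.add_sum_erase _ _ (Finset.mem_univ k)).symm
  have hsplit : (∑ t ∈ R, W (d t) R) + ∑ v ∈ U, W (d v) R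
      = ∑ t ∈ Finset.univ.erase k, W (d t) R := by
    rw [← Finset.sum_union]
    · congr 1
      ext v
      simp only [Finset.mem_union, hU, Finset.mem_sdiff, Finset.mem_univ, true_and,
        Finset.mem_insert, Finset.mem_erase]
      push_neg
      constructor
      · rintro (h | ⟨h1, h2⟩)
        · exact ⟨fun hvk => hk (hvk ▸ h), trivial⟩
        · exact ⟨h1, trivial⟩
      · rintro ⟨h1, -⟩
        by_cases hvR : v ∈ R
        · exact Or.inl hvR
        · exact Or.inr ⟨h1, hvR⟩
    · rw [Finset.disjoint_left]
      intro a haR haU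
      exact (hvU a haU).1 haR
  have hcomm : ∑ t ∈ R, ∑ v ∈ U, W (d t) ((insert v R).erase t)
      = ∑ v ∈ U, ∑ t ∈ R, W (d t) ((insert v R).erase t) := Finset.sum_comm
  rw [hlast, hmid2, hZ, ← hcomm]
  set a := ∑ t ∈ R, W (d t) R
  set b := ∑ v ∈ U, W (d v) R
  set c := ∑ t ∈ R, ∑ v ∈ U, W (d t) ((insert v R).erase t)
  set w := W (d k) R
  rw [← hsplit,
    show w + (a + b) + (a + c) + (b + c) = w + ((a + a) + ((b + b) + (c + c))) by abel,
    h2, h2, h2]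
  simp
end

section
/- Let V be a vector space over ZMod 2, let x, y : V, let T be a nonempty finite set (the users requesting a given file), and let u ∈ T be a designated element. Define, for t ∈ T, the transformed pair (a t, b t) by: if |T| is odd then (a t, b t) = (x, y) for every t; if |T| is even then (a t, b t) = (y, x + y) when t = u and (a t, b t) = (x + y, x) when t ≠ u. Then ∑_{t ∈ T} a t = x and ∑_{t ∈ T} b t = y. -/
lemma zmod2_self_add {V : Type*} [AddCommGroup V] [Module (ZMod 2) V] (v : V) :
    v + v = 0 := by
  have h : ((1 : ZMod 2) + 1) = 0 := by decide
  calc v + v = ((1 : ZMod 2) + 1) • v := by rw [add_smul, one_smul]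
    _ = 0 := by rw [h, zero_smul]

lemma zmod2_odd_nsmul {V : Type*} [AddCommGroup V] [Module (ZMod 2) V]
    {n : ℕ} (hn : Odd n) (v : V) : n • v = v := by
  obtain ⟨k, rfl⟩ := hn
  have h2 : (2 * k) • v = 0 := by
    rw [mul_nsmul]
    simp [two_nsmul, zmod2_self_add]
  rw [add_nsmul, h2, one_nsmul, zero_add]

/-- Equation (29) underlying Lemma 4, per file: summing the pairwise-transformed
segment pairs over all requesters `T` of a file recovers the original pair `(x, y)`. -/
theorem pairwise_transformation_sums
    {β V : Type*} [AddCommGroup V] [Module (ZMod 2) V]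
    (x y : V) (T : Finset β) (hT : T.Nonempty) (u : β) (hu : u ∈ T)
    (a b : β → V)
    (hodd : Odd T.card → ∀ t ∈ T, a t = x ∧ b t = y)
    (hevenu : Even T.card → a u = y ∧ b u = x + y)
    (heven : Even T.card → ∀ t ∈ T, t ≠ u → a t = x + y ∧ b t = x) :
    (∑ t ∈ T, a t = x) ∧ (∑ t ∈ T, b t = y) := by
  classical
  rcases Nat.even_or_odd T.card with he | ho
  · -- even case
    have hcard : Odd (T.erase u).card := by
      have hpos : 0 < T.card := Finset.card_pos.mpr hT
      rw [Finset.card_erase_of_mem hu]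
      rcases he with ⟨k, hk⟩
      exact ⟨k - 1, by omega⟩
    have hsuma : ∑ t ∈ T, a t = a u + ∑ t ∈ T.erase u, a t :=
      (Finset.add_sum_erase T a hu).symm
    have hsumb : ∑ t ∈ T, b t = b u + ∑ t ∈ T.erase u, b t :=
      (Finset.add_sum_erase T b hu).symm
    have hea : ∑ t ∈ T.erase u, a t = x + y := by
      rw [Finset.sum_congr rfl (fun t ht => (heven he t (Finset.mem_of_mem_erase ht)
        (Finset.ne_of_mem_erase ht)).1), Finset.sum_const, zmod2_odd_nsmul hcard]
    have heb : ∑ t ∈ T.erase u, b t = x := by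
      rw [Finset.sum_congr rfl (fun t ht => (heven he t (Finset.mem_of_mem_erase ht)
        (Finset.ne_of_mem_erase ht)).2), Finset.sum_const, zmod2_odd_nsmul hcard]
    obtain ⟨hau, hbu⟩ := hevenu he
    constructor
    · rw [hsuma, hea, hau]
      have := zmod2_self_add y
      calc y + (x + y) = x + (y + y) := by abel
        _ = x := by rw [this, add_zero]
    · rw [hsumb, heb, hbu]
      have := zmod2_self_add x
      calc x + y + x = y + (x + x) := by abel
        _ = y := by rw [this, add_zero]
  · constructor
    · rw [Finset.sum_congr rfl (fun t ht => (hodd ho t ht).1), Finset.sum_const,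
        zmod2_odd_nsmul ho]
    · rw [Finset.sum_congr rfl (fun t ht => (hodd ho t ht).2), Finset.sum_const,
        zmod2_odd_nsmul ho]
end

section
/- Let β be a finite type (the users), α a finite type (the files), and V a vector space over ZMod 2. Let d : β → α be a surjective demand function, let u : α → β be a choice of designated requester with d(u f) = f for every f : α, and let x, y : α → V assign to each file an I-segment and a Q-segment. Define, for t : β with f = d t and n_f = |{t' : β | d t' = f}|, the transformed pair (a t, b t) by: (a t, b t) = (x f, y f) if n_f is odd; (a t, b t) = (y f, x f + y f) if n_f is even and t = u f; and (a t, b t) = (x f + y f, x f) if n_f is even and t ≠ u f. Then ∑_{t : β} a t = ∑_{f : α} x f and ∑_{t : β} b t = ∑_{f : α} y f. -/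
section Aux

variable {β V : Type*} [DecidableEq β] [AddCommGroup V] [Module (ZMod 2) V]

private lemma zmod2_nsmul_even {n : ℕ} (hn : Even n) (v : V) : n • v = 0 := by
  rw [← Nat.cast_smul_eq_nsmul (ZMod 2)]
  have : (n : ZMod 2) = 0 := (ZMod.natCast_eq_zero_iff n 2).2 hn.two_dvd
  rw [this, zero_smul]

private lemma zmod2_nsmul_odd {n : ℕ} (hn : ¬ Even n) (v : V) : n • v = v := by
  rw [← Nat.cast_smul_eq_nsmul (ZMod 2)]
  rw [Nat.not_even_iff] at hn
  have : (n : ZMod 2) = 1 := by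
    rw [← ZMod.natCast_mod n 2, hn, Nat.cast_one]
  rw [this, one_smul]

private lemma fiber_sum (S : Finset β) (u0 : β) (hu0 : u0 ∈ S) (P Q R : V) :
    ∑ t ∈ S, (if Even S.card then (if t = u0 then P else Q) else R)
      = if Even S.card then P + Q else R := by
  by_cases hE : Even S.card
  · simp only [hE, if_true]
    rw [← Finset.add_sum_erase _ _ hu0, if_pos rfl]
    have hsum : ∑ t ∈ S.erase u0, (if t = u0 then P else Q) = Q := by
      rw [Finset.sum_congr rfl (fun t ht => if_neg (Finset.ne_of_mem_erase ht)),
        Finset.sum_const, Finset.card_erase_of_mem hu0]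
      exact zmod2_nsmul_odd (by
        have h1 : 1 ≤ S.card := Finset.card_pos.2 ⟨u0, hu0⟩
        rw [Nat.even_sub h1]; simpa using hE) Q
    rw [hsum]
  · simp only [hE, if_false]
    rw [Finset.sum_const]
    exact zmod2_nsmul_odd hE R

end Aux

/-- Lemma 4 ("z2"): the XOR over all users of the pairwise-transformed segments
equals the XOR over all files of the original segments, both on the I channel
(`a` vs. `x`) and on the Q channel (`b` vs. `y`). -/
theorem transformed_sum_equals_column_parity
    {β α V : Type*} [Fintype β] [Fintype α] [DecidableEq β] [DecidableEq α]
    [AddCommGroup V] [Module (ZMod 2) V]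
    (d : β → α) (hd : Function.Surjective d)
    (u : α → β) (hu : ∀ f, d (u f) = f)
    (x y : α → V) (a b : β → V)
    (ha : ∀ t : β,
      a t = if Even ((Finset.univ.filter fun t' : β => d t' = d t).card)
        then (if t = u (d t) then y (d t) else x (d t) + y (d t))
        else x (d t))
    (hb : ∀ t : β,
      b t = if Even ((Finset.univ.filter fun t' : β => d t' = d t).card)
        then (if t = u (d t) then x (d t) + y (d t) else x (d t))
        else y (d t)) :
    (∑ t : β, a t = ∑ f : α, x f) ∧ (∑ t : β, b t = ∑ f : α, y f) := by
  have two : ∀ v : V, v + v = 0 := fun v => by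
    have h := two_smul (ZMod 2) v
    have h2 : (2 : ZMod 2) = 0 := by decide
    rw [h2, zero_smul] at h
    exact h.symm
  have key : ∀ (g : β → V) (P Q R : α → V),
      (∀ t : β, g t = if Even ((Finset.univ.filter fun t' : β => d t' = d t).card)
        then (if t = u (d t) then P (d t) else Q (d t)) else R (d t)) →
      (∀ f : α, P f + Q f = R f) →
      ∑ t : β, g t = ∑ f : α, R f := by
    intro g P Q R hg hPQR
    rw [← Finset.sum_fiberwise Finset.univ d g]
    refine Finset.sum_congr rfl fun f _ => ?_
    set S := Finset.univ.filter fun t' : β => d t' = f with hS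
    have hu0 : u f ∈ S := by simp [hS, hu f]
    have hrw : ∀ t ∈ S, g t = if Even S.card then (if t = u f then P f else Q f) else R f := by
      intro t ht
      have hdt : d t = f := by simpa [hS] using ht
      rw [hg t, hdt]
    rw [Finset.sum_congr rfl hrw, fiber_sum S (u f) hu0]
    by_cases hE : Even S.card
    · simp [hE, hPQR f]
    · simp [hE]
  constructor
  · exact key a y (fun f => x f + y f) x ha (fun f => by
      rw [show y f + (x f + y f) = x f + (y f + y f) by abel, two, add_zero])
  · exact key b (fun f => x f + y f) x y hb (fun f => by
      rw [show x f + y f + x f = y f + (x f + x f) by abel, two, add_zero])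
end

section
/- Let N, K be integers with 1 ≤ N ≤ K and let d : Fin K → Fin N be surjective. For each user s : Fin K let ℓ_s be the number of distinct files requested by the other users, i.e., ℓ_s = |d '' (Set.univ \ {s})| (as a finite cardinality), and let p be the number of files f : Fin N requested by exactly one user (|d⁻¹(f)| = 1). Then (i) ℓ_s = N − 1 if s is the unique user with demand d(s), and ℓ_s = N otherwise; and (ii) for every integer r ≥ 0, ∑_{s : Fin K} C(K−1−ℓ_s, r+1) = p·C(K−N, r+1) + (K−p)·C(K−1−N, r+1), where C(a,b) = 0 whenever a < b or a < 0 (truncated natural subtraction realizes this since r + 1 ≥ 1). -/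
/-- Counting lemma for the skipped delivery symbols: for a surjective demand
`d : Fin K → Fin N`, (i) the number `ℓ_s` of distinct files requested by users other
than `s` equals `N − 1` exactly when `s` is the unique requester of its file, and
(ii) `∑_s C(K−1−ℓ_s, r+1) = p·C(K−N, r+1) + (K−p)·C(K−1−N, r+1)` where `p` is the
number of files requested by exactly one user (truncated natural subtraction
realizes the convention `C(a,b) = 0` when `a < b` or `a < 0`). -/
theorem skipped_symbols_count
    (N K : ℕ) (hN : 1 ≤ N) (hNK : N ≤ K)
    (d : Fin K → Fin N) (hd : Function.Surjective d) :
    (∀ s : Fin K,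
      ((Finset.univ.erase s).image d).card =
        if ∀ k : Fin K, d k = d s → k = s then N - 1 else N) ∧
    ∀ r : ℕ,
      (∑ s : Fin K,
        Nat.choose (K - 1 - ((Finset.univ.erase s).image d).card) (r + 1))
      = (Finset.univ.filter fun f : Fin N =>
            (Finset.univ.filter fun k : Fin K => d k = f).card = 1).card
          * Nat.choose (K - N) (r + 1)
        + (K - (Finset.univ.filter fun f : Fin N =>
            (Finset.univ.filter fun k : Fin K => d k = f).card = 1).card)
          * Nat.choose (K - 1 - N) (r + 1) := by
  have h1 : ∀ s : Fin K,
      ((Finset.univ.erase s).image d).card =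
        if ∀ k : Fin K, d k = d s → k = s then N - 1 else N := by
    intro s
    by_cases hu : ∀ k : Fin K, d k = d s → k = s
    · rw [if_pos hu]
      have himg : (Finset.univ.erase s).image d = Finset.univ.erase (d s) := by
        ext f
        simp only [Finset.mem_image, Finset.mem_erase, Finset.mem_univ, and_true]
        constructor
        · rintro ⟨k, hk, rfl⟩
          exact fun h => hk (hu k h)
        · intro hf
          obtain ⟨k, hk⟩ := hd f
          exact ⟨k, fun h => hf (by rw [← hk, h]), hk⟩
      rw [himg, Finset.card_erase_of_mem (Finset.mem_univ _), Finset.card_univ,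
        Fintype.card_fin]
    · rw [if_neg hu]
      push_neg at hu
      obtain ⟨k0, hk0, hks⟩ := hu
      have himg : (Finset.univ.erase s).image d = Finset.univ := by
        ext f
        simp only [Finset.mem_univ, iff_true, Finset.mem_image]
        obtain ⟨k, hk⟩ := hd f
        by_cases hks' : k = s
        · exact ⟨k0, Finset.mem_erase.mpr ⟨hks, Finset.mem_univ _⟩, by rw [hk0, ← hks', hk]⟩
        · exact ⟨k, Finset.mem_erase.mpr ⟨hks', Finset.mem_univ _⟩, hk⟩
      rw [himg, Finset.card_univ, Fintype.card_fin]
  refine ⟨h1, fun r => ?_⟩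
  set P := Finset.univ.filter fun f : Fin N =>
      (Finset.univ.filter fun k : Fin K => d k = f).card = 1 with hP
  set S := Finset.univ.filter
      (fun s : Fin K => ∀ k : Fin K, d k = d s → k = s) with hS
  have hSP : S.card = P.card := by
    apply Finset.card_bij (fun s _ => d s)
    · intro s hs
      simp only [hS, Finset.mem_filter, Finset.mem_univ, true_and] at hs
      simp only [hP, Finset.mem_filter, Finset.mem_univ, true_and]
      have : (Finset.univ.filter fun k : Fin K => d k = d s) = {s} := by
        ext k
        simp only [Finset.mem_filter, Finset.mem_univ, true_and,
          Finset.mem_singleton]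
        exact ⟨hs k, fun h => by rw [h]⟩
      rw [this, Finset.card_singleton]
    · intro a ha b hb hab
      simp only [hS, Finset.mem_filter, Finset.mem_univ, true_and] at hb
      exact hb a hab
    · intro f hf
      simp only [hP, Finset.mem_filter, Finset.mem_univ, true_and] at hf
      obtain ⟨k, hk⟩ := Finset.card_eq_one.mp hf
      have hkmem : k ∈ Finset.univ.filter fun j : Fin K => d j = f := by
        rw [hk]; exact Finset.mem_singleton_self k
      have hdk : d k = f := (Finset.mem_filter.mp hkmem).2
      refine ⟨k, ?_, hdk⟩
      simp only [hS, Finset.mem_filter, Finset.mem_univ, true_and]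
      intro j hj
      have : j ∈ Finset.univ.filter fun i : Fin K => d i = f := by
        simp only [Finset.mem_filter, Finset.mem_univ, true_and, hj, hdk]
      rw [hk, Finset.mem_singleton] at this
      exact this
  have hScard : S.card ≤ K := by
    calc S.card ≤ (Finset.univ : Finset (Fin K)).card := Finset.card_le_card (Finset.filter_subset _ _)
    _ = K := by rw [Finset.card_univ, Fintype.card_fin]
  have hsplit := Finset.sum_filter_add_sum_filter_not (Finset.univ : Finset (Fin K))
    (fun s : Fin K => ∀ k : Fin K, d k = d s → k = s)
    (fun s : Fin K =>
      Nat.choose (K - 1 - ((Finset.univ.erase s).image d).card) (r + 1))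
  rw [← hsplit]
  have hA : ∑ s ∈ S,
      Nat.choose (K - 1 - ((Finset.univ.erase s).image d).card) (r + 1)
      = S.card * Nat.choose (K - N) (r + 1) := by
    rw [Finset.sum_congr rfl (fun s hs => ?_), Finset.sum_const, smul_eq_mul]
    simp only [hS, Finset.mem_filter, Finset.mem_univ, true_and] at hs
    rw [h1 s, if_pos hs]
    congr 1
    omega
  have hB : ∑ s ∈ Finset.univ.filter
        (fun s : Fin K => ¬∀ k : Fin K, d k = d s → k = s),
      Nat.choose (K - 1 - ((Finset.univ.erase s).image d).card) (r + 1)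
      = (K - S.card) * Nat.choose (K - 1 - N) (r + 1) := by
    have hcard : (Finset.univ.filter
        (fun s : Fin K => ¬∀ k : Fin K, d k = d s → k = s)).card = K - S.card := by
      rw [Finset.filter_not, Finset.card_sdiff_of_subset (Finset.filter_subset _ _),
        Finset.card_univ, Fintype.card_fin]
    rw [Finset.sum_congr rfl (fun s hs => ?_), Finset.sum_const, smul_eq_mul, hcard]
    simp only [Finset.mem_filter, Finset.mem_univ, true_and] at hs
    rw [h1 s, if_neg hs]
  rw [hA, hB, hSP]
end
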